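/- Define F : ℝ⁴ → ℝ² by F(x₁,x₂,x₃,x₄) = e⁷·(x₁, (√3/2)x₂ − (1/2)x₄), and equip ℝ⁴ with the Euclidean metric g and the standard complex structures I, J, K. Then F is an almost h-conformal slant submersion with slant angles θ_I = π/6, θ_J = π/2, θ_K = π/3 and dilation λ = e⁷. Concretely: ker F_* = span{∂/∂x₃, (1/2)∂/∂x₂ + (√3/2)∂/∂x₄} at every point; g(F_*X, F_*Y) = e¹⁴ g(X,Y) for all X,Y ∈ (ker F_*)^⊥; for every nonzero vertical X the angle between IX and ker F_* equals π/6, the angle between JX and ker F_* equals π/2, and the angle between KX and ker F_* equals π/3. -/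

import Mathlib

open scoped InnerProductSpace

/-- the map `F(x₁,x₂,x₃,x₄) = e⁷·(x₁, (√3/2)x₂ − (1/2)x₄)` from `ℝ⁴` to `ℝ²`. -/
noncomputable def Fmap19 : EuclideanSpace ℝ (Fin 4) →ₗ[ℝ] EuclideanSpace ℝ (Fin 2) where
  toFun x := WithLp.toLp 2 ![Real.exp 7 * x 0, Real.exp 7 * (Real.sqrt 3 / 2 * x 1 - 1 / 2 * x 3)]
  map_add' x y := by
    ext i
    fin_cases i <;> simp [PiLp.add_apply] <;> ring
  map_smul' c x := by
    ext i
    fin_cases i <;> simp [PiLp.smul_apply] <;> ring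

/-- the standard complex structure `I` on `ℝ⁴`:
`I ∂₁ = ∂₂, I ∂₂ = −∂₁, I ∂₃ = ∂₄, I ∂₄ = −∂₃`. -/
def Iop19 : EuclideanSpace ℝ (Fin 4) →ₗ[ℝ] EuclideanSpace ℝ (Fin 4) where
  toFun x := WithLp.toLp 2 ![-x 1, x 0, -x 3, x 2]
  map_add' x y := by
    ext i
    fin_cases i <;> simp [PiLp.add_apply] <;> ring
  map_smul' c x := by
    ext i
    fin_cases i <;> simp [PiLp.smul_apply] <;> ring

/-- the standard complex structure `J` on `ℝ⁴`:
`J ∂₁ = ∂₃, J ∂₂ = −∂₄, J ∂₃ = −∂₁, J ∂₄ = ∂₂`. -/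
def Jop19 : EuclideanSpace ℝ (Fin 4) →ₗ[ℝ] EuclideanSpace ℝ (Fin 4) where
  toFun x := WithLp.toLp 2 ![-x 2, x 3, x 0, -x 1]
  map_add' x y := by
    ext i
    fin_cases i <;> simp [PiLp.add_apply] <;> ring
  map_smul' c x := by
    ext i
    fin_cases i <;> simp [PiLp.smul_apply] <;> ring

/-- the standard complex structure `K` on `ℝ⁴`:
`K ∂₁ = ∂₄, K ∂₂ = ∂₃, K ∂₃ = −∂₂, K ∂₄ = −∂₁`. -/
def Kop19 : EuclideanSpace ℝ (Fin 4) →ₗ[ℝ] EuclideanSpace ℝ (Fin 4) where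
  toFun x := WithLp.toLp 2 ![-x 3, -x 2, x 1, x 0]
  map_add' x y := by
    ext i
    fin_cases i <;> simp [PiLp.add_apply] <;> ring
  map_smul' c x := by
    ext i
    fin_cases i <;> simp [PiLp.smul_apply] <;> ring

/-- the vertical vector `(1/2)∂₂ + (√3/2)∂₄`. -/
noncomputable def vert19 : EuclideanSpace ℝ (Fin 4) :=
  (1 / 2 : ℝ) • EuclideanSpace.single (1 : Fin 4) (1 : ℝ)
    + (Real.sqrt 3 / 2) • EuclideanSpace.single (3 : Fin 4) (1 : ℝ)

/-!
The vertical space is spanned by the orthonormal pair `∂₃`, `w = (1/2)∂₂ + (√3/2)∂₄`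
(coordinates numbered from 1 here, from 0 in the code). `I`, `J`, `K` are skew, and for a skew
map `R` the projection of `R v` onto a plane with orthonormal basis `e, w` has norm
`|⟪R e, w⟫| ‖v‖`; so the slant angles are read off from `⟪I ∂₃, w⟫ = √3/2`, `⟪J ∂₃, w⟫ = 0` and
`⟪K ∂₃, w⟫ = -1/2`. Horizontal vectors have `X₃ = 0` and `X₂ = -√3 X₄`, so `F X = e⁷ (X₁, -2 X₄)`
while `⟪X, Y⟫ = X₁ Y₁ + 4 X₄ Y₄`.
-/

section SkewProjection

variable {E : Type*} [NormedAddCommGroup E] [InnerProductSpace ℝ E]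

lemma real_inner_map_swap_of_forall_inner_map_self_eq_zero {R : E →ₗ[ℝ] E}
    (hR : ∀ x, ⟪R x, x⟫_ℝ = 0) (x y : E) : ⟪R x, y⟫_ℝ = -⟪R y, x⟫_ℝ := by
  have h := hR (x + y)
  rw [map_add, inner_add_left, inner_add_right, inner_add_right, hR x, hR y] at h
  linarith

lemma norm_smul_add_smul_of_orthonormal_pair {e w : E} (he : ‖e‖ = 1) (hw : ‖w‖ = 1)
    (hew : ⟪e, w⟫_ℝ = 0) (a b : ℝ) : ‖a • e + b • w‖ = √(a ^ 2 + b ^ 2) := by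
  have horth : ⟪a • e, b • w⟫_ℝ = 0 := by
    rw [real_inner_smul_left, real_inner_smul_right, hew, mul_zero, mul_zero]
  rw [← Real.sqrt_mul_self (norm_nonneg _), norm_add_sq_eq_norm_sq_add_norm_sq_real horth,
    norm_smul, norm_smul, he, hw, Real.norm_eq_abs, Real.norm_eq_abs, mul_one, mul_one,
    ← sq, ← sq, sq_abs, sq_abs]

/-- The projection of `R (a • e + b • w)` is `⟪R e, w⟫ • (a • w - b • e)`: skewness kills
`⟪R e, e⟫` and `⟪R w, w⟫` and turns `⟪R w, e⟫` into `-⟪R e, w⟫`. -/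
theorem norm_orthogonalProjection_map_of_forall_inner_map_self_eq_zero
    {K : Submodule ℝ E} [K.HasOrthogonalProjection] {e w : E} (hK : K = Submodule.span ℝ {e, w})
    (he : ‖e‖ = 1) (hw : ‖w‖ = 1) (hew : ⟪e, w⟫_ℝ = 0)
    {R : E →ₗ[ℝ] E} (hR : ∀ x, ⟪R x, x⟫_ℝ = 0) {v : E} (hv : v ∈ K) :
    ‖(K.orthogonalProjectionOnto (R v) : E)‖ = |⟪R e, w⟫_ℝ| * ‖v‖ := by
  have hee : ⟪e, e⟫_ℝ = 1 := by rw [real_inner_self_eq_norm_sq, he, one_pow]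
  have hww : ⟪w, w⟫_ℝ = 1 := by rw [real_inner_self_eq_norm_sq, hw, one_pow]
  have hwe : ⟪w, e⟫_ℝ = 0 := by rw [real_inner_comm, hew]
  have hswap := real_inner_map_swap_of_forall_inner_map_self_eq_zero hR
  set c := ⟪R e, w⟫_ℝ
  rw [hK, Submodule.mem_span_pair] at hv
  obtain ⟨a, b, rfl⟩ := hv
  have hproj : (K.orthogonalProjectionOnto (R (a • e + b • w)) : E)
      = (-(b * c)) • e + (a * c) • w := by
    refine Submodule.eq_starProjection_of_mem_of_inner_eq_zero ?_ ?_
    · rw [hK]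
      exact Submodule.add_mem _ (Submodule.smul_mem _ _ (Submodule.subset_span (by simp)))
        (Submodule.smul_mem _ _ (Submodule.subset_span (by simp)))
    · intro u hu
      rw [hK, Submodule.mem_span_pair] at hu
      obtain ⟨a', b', rfl⟩ := hu
      simp only [map_add, map_smul, inner_sub_left, inner_add_left, inner_add_right,
        real_inner_smul_left, real_inner_smul_right, hR, hee, hww, hew, hwe, hswap w e]
      ring
  rw [hproj, norm_smul_add_smul_of_orthonormal_pair he hw hew,
    norm_smul_add_smul_of_orthonormal_pair he hw hew, ← Real.sqrt_sq_eq_abs, ← Real.sqrt_mul]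
  · ring_nf
  · positivity

end SkewProjection

lemma real_inner_fin_four (x y : EuclideanSpace ℝ (Fin 4)) :
    ⟪x, y⟫_ℝ = x 0 * y 0 + x 1 * y 1 + x 2 * y 2 + x 3 * y 3 := by
  simp only [PiLp.inner_apply, RCLike.inner_apply, conj_trivial, Fin.sum_univ_four]
  ring

lemma real_inner_fin_two (x y : EuclideanSpace ℝ (Fin 2)) :
    ⟪x, y⟫_ℝ = x 0 * y 0 + x 1 * y 1 := by
  simp only [PiLp.inner_apply, RCLike.inner_apply, conj_trivial, Fin.sum_univ_two]
  ring

lemma sqrt_three_mul_self : √3 * √3 = 3 := Real.mul_self_sqrt (by norm_num)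

lemma Fmap19_apply_zero (x : EuclideanSpace ℝ (Fin 4)) : Fmap19 x 0 = Real.exp 7 * x 0 := rfl

lemma Fmap19_apply_one (x : EuclideanSpace ℝ (Fin 4)) :
    Fmap19 x 1 = Real.exp 7 * (√3 / 2 * x 1 - 1 / 2 * x 3) := rfl

lemma mem_ker_Fmap19_iff (x : EuclideanSpace ℝ (Fin 4)) :
    x ∈ LinearMap.ker Fmap19 ↔ x 0 = 0 ∧ x 3 = √3 * x 1 := by
  have hexp := Real.exp_ne_zero 7
  rw [LinearMap.mem_ker]
  constructor
  · intro h
    have h0 := congrArg (· 0) h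
    have h1 := congrArg (· 1) h
    simp only [Fmap19_apply_zero, Fmap19_apply_one, PiLp.zero_apply, mul_eq_zero,
      hexp, false_or] at h0 h1
    exact ⟨h0, by linarith⟩
  · rintro ⟨h0, h3⟩
    ext i
    fin_cases i
    · show Real.exp 7 * x 0 = 0
      rw [h0, mul_zero]
    · show Real.exp 7 * (√3 / 2 * x 1 - 1 / 2 * x 3) = 0
      rw [h3]
      ring

lemma vert19_apply (i : Fin 4) : vert19 i = ![0, 1 / 2, 0, √3 / 2] i := by
  fin_cases i <;> simp [vert19]

lemma real_inner_vert19_right (x : EuclideanSpace ℝ (Fin 4)) :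
    ⟪x, vert19⟫_ℝ = x 1 / 2 + √3 / 2 * x 3 := by
  simp only [real_inner_fin_four, vert19_apply, Matrix.cons_val_zero, Matrix.cons_val_one,
    Matrix.cons_val, mul_zero, zero_add, add_zero]
  ring

lemma norm_vert19 : ‖vert19‖ = 1 := by
  rw [norm_eq_sqrt_real_inner, real_inner_vert19_right, vert19_apply, vert19_apply]
  simp only [Matrix.cons_val_one, Matrix.cons_val_zero, Matrix.cons_val, Real.sqrt_eq_one]
  linear_combination sqrt_three_mul_self / 4

lemma real_inner_single_two_vert19 : ⟪EuclideanSpace.single 2 (1 : ℝ), vert19⟫_ℝ = 0 := by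
  simp [real_inner_vert19_right]

lemma ker_Fmap19 :
    LinearMap.ker Fmap19
      = Submodule.span ℝ ({EuclideanSpace.single (2 : Fin 4) (1 : ℝ), vert19} :
          Set (EuclideanSpace ℝ (Fin 4))) := by
  ext x
  rw [mem_ker_Fmap19_iff, Submodule.mem_span_pair]
  constructor
  · rintro ⟨h0, h3⟩
    refine ⟨x 2, 2 * x 1, ?_⟩
    ext i
    fin_cases i <;> simp [vert19_apply, h0, h3] <;> ring
  · rintro ⟨a, b, rfl⟩
    refine ⟨by simp [vert19_apply], ?_⟩
    simp only [PiLp.add_apply, PiLp.smul_apply, PiLp.single_eq_of_ne, smul_eq_mul, vert19_apply,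
      Matrix.cons_val, Matrix.cons_val_one, ne_eq, Fin.reduceEq, not_false_eq_true, mul_zero,
      zero_add]
    ring

lemma Fmap19_surjective : Function.Surjective Fmap19 := by
  intro y
  refine ⟨WithLp.toLp 2 ![y 0 / Real.exp 7, 0, 0, -2 * y 1 / Real.exp 7], ?_⟩
  ext i
  fin_cases i <;> simp [Fmap19] <;> field_simp

lemma apply_eq_of_mem_orthogonal_ker_Fmap19 {X : EuclideanSpace ℝ (Fin 4)}
    (hX : X ∈ (LinearMap.ker Fmap19)ᗮ) : X 2 = 0 ∧ X 1 = -√3 * X 3 := by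
  have h2 := Submodule.inner_right_of_mem_orthogonal (u := EuclideanSpace.single 2 1)
    (ker_Fmap19 ▸ Submodule.subset_span (by simp)) hX
  have hw := Submodule.inner_right_of_mem_orthogonal (u := vert19)
    (ker_Fmap19 ▸ Submodule.subset_span (by simp)) hX
  rw [real_inner_comm, real_inner_vert19_right] at hw
  simp only [EuclideanSpace.inner_single_left, map_one, one_mul] at h2
  refine ⟨h2, ?_⟩
  linear_combination 2 * hw

lemma real_inner_Fmap19_of_mem_orthogonal_ker {X Y : EuclideanSpace ℝ (Fin 4)}
    (hX : X ∈ (LinearMap.ker Fmap19)ᗮ) (hY : Y ∈ (LinearMap.ker Fmap19)ᗮ) :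
    ⟪Fmap19 X, Fmap19 Y⟫_ℝ = Real.exp 14 * ⟪X, Y⟫_ℝ := by
  obtain ⟨hX2, hX1⟩ := apply_eq_of_mem_orthogonal_ker_Fmap19 hX
  obtain ⟨hY2, hY1⟩ := apply_eq_of_mem_orthogonal_ker_Fmap19 hY
  have hexp : Real.exp 14 = Real.exp 7 * Real.exp 7 := by rw [← Real.exp_add]; norm_num
  rw [real_inner_fin_two, real_inner_fin_four, Fmap19_apply_zero, Fmap19_apply_zero,
    Fmap19_apply_one, Fmap19_apply_one, hX2, hY2, hX1, hY1, hexp]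
  linear_combination (Real.exp 7 ^ 2 * X 3 * Y 3 * (√3 * √3 + 1) / 4) * sqrt_three_mul_self

lemma real_inner_Iop19_self (x : EuclideanSpace ℝ (Fin 4)) : ⟪Iop19 x, x⟫_ℝ = 0 := by
  simp only [Iop19, LinearMap.coe_mk, AddHom.coe_mk, real_inner_fin_four,
    Matrix.cons_val_zero, Matrix.cons_val_one, Matrix.cons_val]
  ring

lemma real_inner_Jop19_self (x : EuclideanSpace ℝ (Fin 4)) : ⟪Jop19 x, x⟫_ℝ = 0 := by
  simp only [Jop19, LinearMap.coe_mk, AddHom.coe_mk, real_inner_fin_four,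
    Matrix.cons_val_zero, Matrix.cons_val_one, Matrix.cons_val]
  ring

lemma real_inner_Kop19_self (x : EuclideanSpace ℝ (Fin 4)) : ⟪Kop19 x, x⟫_ℝ = 0 := by
  simp only [Kop19, LinearMap.coe_mk, AddHom.coe_mk, real_inner_fin_four,
    Matrix.cons_val_zero, Matrix.cons_val_one, Matrix.cons_val]
  ring

lemma Iop19_single_two : Iop19 (EuclideanSpace.single 2 1) = EuclideanSpace.single 3 1 := by
  ext i
  fin_cases i <;> simp [Iop19]

lemma Jop19_single_two : Jop19 (EuclideanSpace.single 2 1) = -EuclideanSpace.single 0 1 := by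
  ext i
  fin_cases i <;> simp [Jop19]

lemma Kop19_single_two : Kop19 (EuclideanSpace.single 2 1) = -EuclideanSpace.single 1 1 := by
  ext i
  fin_cases i <;> simp [Kop19]

lemma abs_real_inner_Iop19_single_two_vert19 :
    |⟪Iop19 (EuclideanSpace.single 2 1), vert19⟫_ℝ| = Real.cos (Real.pi / 6) := by
  rw [Iop19_single_two, EuclideanSpace.inner_single_left, vert19_apply, Matrix.cons_val_three,
    Real.cos_pi_div_six]
  norm_num
  positivity

lemma abs_real_inner_Jop19_single_two_vert19 :
    |⟪Jop19 (EuclideanSpace.single 2 1), vert19⟫_ℝ| = Real.cos (Real.pi / 2) := by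
  rw [Jop19_single_two, inner_neg_left, EuclideanSpace.inner_single_left, vert19_apply]
  simp

lemma abs_real_inner_Kop19_single_two_vert19 :
    |⟪Kop19 (EuclideanSpace.single 2 1), vert19⟫_ℝ| = Real.cos (Real.pi / 3) := by
  rw [Kop19_single_two, inner_neg_left, EuclideanSpace.inner_single_left, vert19_apply]
  norm_num

/-- `F(x₁,x₂,x₃,x₄) = e⁷·(x₁, (√3/2)x₂ − (1/2)x₄)` is an almost
h-conformal slant submersion with slant angles `θ_I = π/6`, `θ_J = π/2`,
`θ_K = π/3` and dilation `λ = e⁷`: it is a surjective submersion,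
`ker F_* = span{∂₃, (1/2)∂₂ + (√3/2)∂₄}`,
`g(F_* X, F_* Y) = e¹⁴ g(X, Y)` for horizontal `X, Y`, and for vertical `v`
the norms of the orthogonal projections of `I v`, `J v`, `K v` onto `ker F_*`
are `cos(π/6)‖v‖`, `cos(π/2)‖v‖`, `cos(π/3)‖v‖` (i.e. the angles between
`I v`, `J v`, `K v` and `ker F_*` are `π/6`, `π/2`, `π/3` for `v ≠ 0`). -/
theorem example_stmt19 :
    Function.Surjective Fmap19 ∧
    (LinearMap.ker Fmap19
      = Submodule.span ℝ ({EuclideanSpace.single (2 : Fin 4) (1 : ℝ), vert19} :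
          Set (EuclideanSpace ℝ (Fin 4)))) ∧
    (∀ X Y : EuclideanSpace ℝ (Fin 4),
      X ∈ (LinearMap.ker Fmap19)ᗮ → Y ∈ (LinearMap.ker Fmap19)ᗮ →
        ⟪Fmap19 X, Fmap19 Y⟫_ℝ = Real.exp 14 * ⟪X, Y⟫_ℝ) ∧
    (∀ v ∈ LinearMap.ker Fmap19,
      ‖(Submodule.orthogonalProjectionOnto (LinearMap.ker Fmap19) (Iop19 v) :
          EuclideanSpace ℝ (Fin 4))‖ = Real.cos (Real.pi / 6) * ‖v‖) ∧
    (∀ v ∈ LinearMap.ker Fmap19,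
      ‖(Submodule.orthogonalProjectionOnto (LinearMap.ker Fmap19) (Jop19 v) :
          EuclideanSpace ℝ (Fin 4))‖ = Real.cos (Real.pi / 2) * ‖v‖) ∧
    (∀ v ∈ LinearMap.ker Fmap19,
      ‖(Submodule.orthogonalProjectionOnto (LinearMap.ker Fmap19) (Kop19 v) :
          EuclideanSpace ℝ (Fin 4))‖ = Real.cos (Real.pi / 3) * ‖v‖) := by
  have he : ‖EuclideanSpace.single (2 : Fin 4) (1 : ℝ)‖ = 1 := by simp
  have slant := fun R hR v hv ↦ norm_orthogonalProjection_map_of_forall_inner_map_self_eq_zero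
    (R := R) ker_Fmap19 he norm_vert19 real_inner_single_two_vert19 hR (v := v) hv
  refine ⟨Fmap19_surjective, ker_Fmap19, fun X Y ↦ real_inner_Fmap19_of_mem_orthogonal_ker,
    fun v hv ↦ ?_, fun v hv ↦ ?_, fun v hv ↦ ?_⟩
  · rw [slant _ real_inner_Iop19_self v hv, abs_real_inner_Iop19_single_two_vert19]
  · rw [slant _ real_inner_Jop19_self v hv, abs_real_inner_Jop19_single_two_vert19]
  · rw [slant _ real_inner_Kop19_self v hv, abs_real_inner_Kop19_single_two_vert19]
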